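/- arXiv:q-bio/0508001 — 2 statements merged into one kernel-verified Lean document; each statement's English description precedes it below -/
import Mathlib

section
/- Let T be a positively edge-weighted phylogenetic X-tree with |X| = n ≥ 4, let 2 ≤ m ≤ n−1, let D be the m-subtree weight map of T, and let S_D(i,j) = Σ D({i,j} ∪ Y), the sum over all (m−2)-element subsets Y of X \ {i,j}. Let i ∈ X be a leaf with pendant edge e_i, and let a, b ∈ X be leaves such that the path from i to a and the path from i to b intersect exactly in the edge e_i. Denote by e_1, …, e_n the pendant edges of T (e_j adjacent to leaf j) and by int(E(T)) the set of internal (non-pendant) edges. Then S_D(i,a) + S_D(i,b) − S_D(a,b) = 2·C(n−3, m−2)·w(e_i) + C(n−3, m−3)·Σ_{j=1}^{n} w(e_j) + C_i, where C_i = Σ_{e∈int(E(T))} [C(n−2, m−2) − C(|L_i(e)|−2, m−2)]·w(e) and C(·,·) denotes the binomial coefficient. -/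
open SimpleGraph Finset

attribute [local instance] Classical.propDecidable

noncomputable section

/-- `e` lies on some path (hence on the unique path, in a tree) from `a` to `b`. -/
def OnPath {V : Type*} (G : SimpleGraph V) (a b : V) (e : Sym2 V) : Prop :=
  ∃ p : G.Walk a b, p.IsPath ∧ e ∈ p.edges

/-- The edge set `[R]` of the smallest subtree of a tree `G` spanning `R`. -/
def subtreeEdges {V : Type*} [Fintype V] (G : SimpleGraph V) (R : Finset V) :
    Finset (Sym2 V) :=
  G.edgeFinset.filter fun e => ∃ a ∈ R, ∃ b ∈ R, OnPath G a b e

/-- The subtree weight `D(R) = ∑_{e ∈ [R]} w(e)`. -/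
def subtreeWeight {V : Type*} [Fintype V] (G : SimpleGraph V) (w : Sym2 V → ℝ)
    (R : Finset V) : ℝ :=
  ∑ e ∈ subtreeEdges G R, w e

/-- `L_i(e)`: the set of leaves in the component of `T - e` containing `i`. -/
def leafSide {V : Type*} [Fintype V] (G : SimpleGraph V) (X : Finset V)
    (i : V) (e : Sym2 V) : Finset V :=
  X.filter fun x => (G.deleteEdges {e}).Reachable i x

/-- `S_D(i,j) = ∑_{Y ∈ C(X \ {i,j}, m-2)} D({i,j} ∪ Y)`. -/
def SDmap {V : Type*} [Fintype V] (G : SimpleGraph V) (w : Sym2 V → ℝ)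
    (X : Finset V) (m : ℕ) (i j : V) : ℝ :=
  ∑ Y ∈ ((X.erase i).erase j).powersetCard (m - 2),
    subtreeWeight G w (insert i (insert j Y))

/-- Binomial coefficient with integer arguments, `0` whenever `b < 0` or `a < b`. -/
def C (a b : ℤ) : ℤ := if 0 ≤ b ∧ b ≤ a then (a.toNat.choose b.toNat : ℤ) else 0

/-- `(i,j;k,l)` is a tree quartet: the (unique) path from `i` to `j` and the (unique) path
from `k` to `l` share no edges. -/
def IsQuartet {V : Type*} (G : SimpleGraph V) (i j k l : V) : Prop :=
  ∀ (p : G.Walk i j) (q : G.Walk k l), p.IsPath → q.IsPath →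
    ∀ e ∈ p.edges, e ∉ q.edges

/-! ### Auxiliary facts about reachability after deleting one edge of a tree -/

section Reach
variable {V : Type*} {G : SimpleGraph V}

lemma reach_or_walk {u v : V} {x y : V} (p : G.Walk x y)
    (hy : (G.deleteEdges {s(u,v)}).Reachable y u ∨ (G.deleteEdges {s(u,v)}).Reachable y v) :
    (G.deleteEdges {s(u,v)}).Reachable x u ∨ (G.deleteEdges {s(u,v)}).Reachable x v := by
  induction p with
  | nil => exact hy
  | @cons a c _ h q ih =>
    by_cases he : s(a, c) = s(u, v)
    · rw [Sym2.eq_iff] at he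
      rcases he with ⟨rfl, rfl⟩ | ⟨rfl, rfl⟩
      · exact Or.inl (Reachable.refl _)
      · exact Or.inr (Reachable.refl _)
    · have hadj : (G.deleteEdges {s(u,v)}).Adj a c := by
        rw [deleteEdges_adj]; exact ⟨h, by simpa using he⟩
      exact (ih hy).imp (fun h' => hadj.reachable.trans h') (fun h' => hadj.reachable.trans h')

lemma reach_or (hc : G.Preconnected) {u v : V} (x : V) :
    (G.deleteEdges {s(u,v)}).Reachable x u ∨ (G.deleteEdges {s(u,v)}).Reachable x v := by
  obtain ⟨p⟩ := hc x u
  exact reach_or_walk p (Or.inl (Reachable.refl _))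

lemma not_reach_del (hT : G.IsTree) {u v : V} (huv : G.Adj u v) :
    ¬ (G.deleteEdges {s(u,v)}).Reachable u v := by
  intro h
  obtain ⟨q0⟩ := h
  set q := q0.toPath with hq
  have hq' : ∀ e ∈ (q : (G.deleteEdges {s(u,v)}).Walk u v).edges, e ∈ G.edgeSet := by
    intro e he
    have := (q : (G.deleteEdges {s(u,v)}).Walk u v).edges_subset_edgeSet he
    rw [edgeSet_deleteEdges] at this
    exact this.1
  have hne : ∀ e ∈ (q : (G.deleteEdges {s(u,v)}).Walk u v).edges, e ≠ s(u,v) := by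
    intro e he
    have := (q : (G.deleteEdges {s(u,v)}).Walk u v).edges_subset_edgeSet he
    rw [edgeSet_deleteEdges] at this
    simpa using this.2
  let r : G.Walk u v := (q : (G.deleteEdges {s(u,v)}).Walk u v).transfer G hq'
  have hr : r.IsPath := q.2.transfer hq'
  have := hT.2.path_unique (SimpleGraph.Path.singleton huv) ⟨r, hr⟩
  have hmem : s(u,v) ∈ r.edges := by
    have : (SimpleGraph.Path.singleton huv : G.Walk u v) = r := congrArg _ this
    rw [← this]
    simp [SimpleGraph.Path.singleton]
  rw [SimpleGraph.Walk.edges_transfer] at hmem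
  exact hne _ hmem rfl

lemma onPath_iff (hT : G.IsTree) {x y : V} {e : Sym2 V} (he : e ∈ G.edgeSet) :
    OnPath G x y e ↔ ¬ (G.deleteEdges {e}).Reachable x y := by
  constructor
  · rintro ⟨p, hp, hep⟩ hr
    obtain ⟨q0⟩ := hr
    set q := q0.toPath
    have hq' : ∀ e' ∈ (q : (G.deleteEdges {e}).Walk x y).edges, e' ∈ G.edgeSet := by
      intro e' he'
      have := (q : (G.deleteEdges {e}).Walk x y).edges_subset_edgeSet he'
      rw [edgeSet_deleteEdges] at this
      exact this.1
    let r : G.Walk x y := (q : (G.deleteEdges {e}).Walk x y).transfer G hq'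
    have hr : r.IsPath := q.2.transfer hq'
    have hpq : (⟨p, hp⟩ : G.Path x y) = ⟨r, hr⟩ := hT.2.path_unique _ _
    have : e ∈ r.edges := by
      have : p = r := congrArg Subtype.val hpq
      rwa [← this]
    rw [SimpleGraph.Walk.edges_transfer] at this
    have := (q : (G.deleteEdges {e}).Walk x y).edges_subset_edgeSet this
    rw [edgeSet_deleteEdges] at this
    exact this.2 rfl
  · intro h
    obtain ⟨p0⟩ := hT.isConnected.preconnected x y
    set p := p0.toPath
    by_cases hep : e ∈ (p : G.Walk x y).edges
    · exact ⟨p, p.2, hep⟩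
    · exfalso
      apply h
      exact ⟨(p : G.Walk x y).toDeleteEdges {e}
        (fun e' he' => by simp only [Set.mem_singleton_iff]; rintro rfl; exact hep he')⟩

lemma two_class (hT : G.IsTree) {e : Sym2 V} (he : e ∈ G.edgeSet) {x y z : V}
    (hxy : ¬ (G.deleteEdges {e}).Reachable x y) (hxz : ¬ (G.deleteEdges {e}).Reachable x z) :
    (G.deleteEdges {e}).Reachable y z := by
  induction e with
  | _ u v =>
    rcases reach_or hT.isConnected.preconnected (u := u) (v := v) x with hx | hx
    · rcases reach_or hT.isConnected.preconnected (u := u) (v := v) y with hy | hy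
      · exact absurd (hx.trans hy.symm) hxy
      · rcases reach_or hT.isConnected.preconnected (u := u) (v := v) z with hz | hz
        · exact absurd (hx.trans hz.symm) hxz
        · exact hy.trans hz.symm
    · rcases reach_or hT.isConnected.preconnected (u := u) (v := v) y with hy | hy
      · rcases reach_or hT.isConnected.preconnected (u := u) (v := v) z with hz | hz
        · exact hy.trans hz.symm
        · exact absurd (hx.trans hz.symm) hxz
      · exact absurd (hx.trans hy.symm) hxy

end Reach

/-! ### Leaves and pendant edges -/

section Leaf
variable {V : Type*} [Fintype V] {G : SimpleGraph V}

lemma leaf_edge_unique {j : V} (hdeg : G.degree j = 1) {e e' : Sym2 V}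
    (he : e ∈ G.edgeSet) (hje : j ∈ e) (he' : e' ∈ G.edgeSet) (hje' : j ∈ e') : e = e' := by
  classical
  have h1 : e ∈ G.incidenceFinset j := by
    rw [mem_incidenceFinset]; exact ⟨he, hje⟩
  have h2 : e' ∈ G.incidenceFinset j := by
    rw [mem_incidenceFinset]; exact ⟨he', hje'⟩
  have hc : (G.incidenceFinset j).card ≤ 1 := by
    rw [card_incidenceFinset_eq_degree, hdeg]
  exact Finset.card_le_one.1 hc _ h1 _ h2

lemma reach_pendant {j : V} (hdeg : G.degree j = 1) {e : Sym2 V}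
    (he : e ∈ G.edgeSet) (hje : j ∈ e) {x : V}
    (h : (G.deleteEdges {e}).Reachable j x) : x = j := by
  obtain ⟨p⟩ := h
  cases p with
  | nil => rfl
  | @cons _ c _ h' q =>
    rw [deleteEdges_adj] at h'
    have : s(j, c) = e :=
      leaf_edge_unique hdeg (G.mem_edgeSet.2 h'.1) (Sym2.mem_mk_left _ _) he hje
    exact absurd this (by simpa using h'.2)

lemma reach_of_ne_pendant (hT : G.IsTree) {j : V} (hdeg : G.degree j = 1) {e : Sym2 V}
    (he : e ∈ G.edgeSet) (hje : j ∈ e) {x z : V} (hx : x ≠ j) (hz : z ≠ j) :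
    (G.deleteEdges {e}).Reachable x z := by
  obtain ⟨v, rfl⟩ := Sym2.mem_iff_exists.1 hje
  have hax : (G.deleteEdges {s(j,v)}).Reachable x v := by
    rcases reach_or hT.isConnected.preconnected (u := j) (v := v) x with h | h
    · exact absurd (reach_pendant hdeg he hje h.symm) hx
    · exact h
  have haz : (G.deleteEdges {s(j,v)}).Reachable z v := by
    rcases reach_or hT.isConnected.preconnected (u := j) (v := v) z with h | h
    · exact absurd (reach_pendant hdeg he hje h.symm) hz
    · exact h
  exact hax.trans haz.symm

lemma not_reach_pendant {j : V} (hdeg : G.degree j = 1) {e : Sym2 V}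
    (he : e ∈ G.edgeSet) (hje : j ∈ e) {x : V} (hx : x ≠ j) :
    ¬ (G.deleteEdges {e}).Reachable x j :=
  fun h => hx (reach_pendant hdeg he hje h.symm)

lemma leafSide_pendant (hT : G.IsTree) {X : Finset V} {j : V} (hdeg : G.degree j = 1)
    {e : Sym2 V} (he : e ∈ G.edgeSet) (hje : j ∈ e) {x : V} (hxj : x ≠ j) :
    leafSide G X x e = X.erase j := by
  ext z
  simp only [leafSide, Finset.mem_filter, Finset.mem_erase]
  constructor
  · rintro ⟨hzX, hz⟩
    refine ⟨fun hzj => ?_, hzX⟩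
    subst hzj
    exact not_reach_pendant hdeg he hje hxj hz
  · rintro ⟨hzj, hzX⟩
    exact ⟨hzX, reach_of_ne_pendant hT hdeg he hje hxj hzj⟩

lemma leafSide_congr {X : Finset V} {x y : V} {e : Sym2 V}
    (h : (G.deleteEdges {e}).Reachable x y) :
    leafSide G X y e = leafSide G X x e := by
  ext z
  simp only [leafSide, Finset.mem_filter, and_congr_right_iff]
  exact fun _ => ⟨fun hz => h.trans hz, fun hz => h.symm.trans hz⟩

end Leaf

/-! ### Counting lemmas -/

section Count
variable {V : Type*} [Fintype V] {G : SimpleGraph V}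

lemma mem_subtreeEdges_iff (hT : G.IsTree) {e : Sym2 V} (he : e ∈ G.edgeSet) (R : Finset V) :
    e ∈ subtreeEdges G R ↔ ∃ p ∈ R, ∃ q ∈ R, ¬ (G.deleteEdges {e}).Reachable p q := by
  unfold subtreeEdges
  rw [Finset.mem_filter]
  simp only [mem_edgeFinset, he, true_and]
  constructor
  · rintro ⟨p, hp, q, hq, hpq⟩; exact ⟨p, hp, q, hq, (onPath_iff hT he).1 hpq⟩
  · rintro ⟨p, hp, q, hq, hpq⟩; exact ⟨p, hp, q, hq, (onPath_iff hT he).2 hpq⟩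

omit [Fintype V] in
lemma card_erase_erase {X : Finset V} {x y : V} (hx : x ∈ X) (hy : y ∈ X) (hxy : x ≠ y) :
    ((X.erase x).erase y).card = X.card - 2 := by
  rw [Finset.card_erase_of_mem (Finset.mem_erase.2 ⟨hxy.symm, hy⟩),
    Finset.card_erase_of_mem hx]
  omega

lemma count_opp (hT : G.IsTree) {e : Sym2 V} (he : e ∈ G.edgeSet) {X : Finset V} {x y : V}
    (hx : x ∈ X) (hy : y ∈ X)
    (hxy : ¬ (G.deleteEdges {e}).Reachable x y) (r : ℕ) :
    ((((X.erase x).erase y).powersetCard r).filter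
        (fun Y => e ∈ subtreeEdges G (insert x (insert y Y)))).card
      = (X.card - 2).choose r := by
  have hne : x ≠ y := by rintro rfl; exact hxy (Reachable.refl _)
  rw [Finset.filter_true_of_mem, Finset.card_powersetCard, card_erase_erase hx hy hne]
  intro Y _
  exact (mem_subtreeEdges_iff hT he _).2
    ⟨x, Finset.mem_insert_self _ _, y, Finset.mem_insert_of_mem (Finset.mem_insert_self _ _), hxy⟩

lemma count_same (hT : G.IsTree) {e : Sym2 V} (he : e ∈ G.edgeSet) {X : Finset V} {x y : V}
    (hx : x ∈ X) (hy : y ∈ X) (hne : x ≠ y)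
    (hreq : (G.deleteEdges {e}).Reachable x y) (r : ℕ) :
    ((((X.erase x).erase y).powersetCard r).filter
        (fun Y => e ∈ subtreeEdges G (insert x (insert y Y)))).card
      = (X.card - 2).choose r - ((leafSide G X x e).card - 2).choose r := by
  set K := leafSide G X x e with hK
  have hxK : x ∈ K := Finset.mem_filter.2 ⟨hx, Reachable.refl _⟩
  have hyK : y ∈ K := Finset.mem_filter.2 ⟨hy, hreq⟩
  have hcompl : (((X.erase x).erase y).powersetCard r).filter
      (fun Y => ¬ (e ∈ subtreeEdges G (insert x (insert y Y))))
      = ((K.erase x).erase y).powersetCard r := by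
    ext Y
    simp only [Finset.mem_filter, Finset.mem_powersetCard, mem_subtreeEdges_iff hT he]
    constructor
    · rintro ⟨⟨hYsub, hYcard⟩, hcond⟩
      refine ⟨fun z hz => ?_, hYcard⟩
      have hzX := hYsub hz
      rw [Finset.mem_erase] at hzX
      have hzX2 := hzX.2
      rw [Finset.mem_erase] at hzX2
      have hreach : (G.deleteEdges {e}).Reachable x z := by
        by_contra hc
        exact hcond ⟨x, Finset.mem_insert_self _ _, z,
          Finset.mem_insert_of_mem (Finset.mem_insert_of_mem hz), hc⟩
      exact Finset.mem_erase.2 ⟨hzX.1, Finset.mem_erase.2 ⟨hzX2.1,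
        Finset.mem_filter.2 ⟨hzX2.2, hreach⟩⟩⟩
    · rintro ⟨hYsub, hYcard⟩
      have hYsub' : Y ⊆ (X.erase x).erase y := by
        intro z hz
        have h1 := hYsub hz
        rw [Finset.mem_erase] at h1 ⊢
        refine ⟨h1.1, ?_⟩
        have h2 := h1.2
        rw [Finset.mem_erase] at h2 ⊢
        exact ⟨h2.1, (Finset.mem_filter.1 h2.2).1⟩
      refine ⟨⟨hYsub', hYcard⟩, ?_⟩
      rintro ⟨p, hp, q, hq, hpq⟩
      have key : ∀ z ∈ insert x (insert y Y), (G.deleteEdges {e}).Reachable x z := by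
        intro z hz
        rcases Finset.mem_insert.1 hz with rfl | hz
        · exact Reachable.refl _
        rcases Finset.mem_insert.1 hz with rfl | hz
        · exact hreq
        · have h1 := hYsub hz
          rw [Finset.mem_erase] at h1
          have h2 := h1.2
          rw [Finset.mem_erase] at h2
          exact (Finset.mem_filter.1 h2.2).2
      exact hpq ((key p hp).symm.trans (key q hq))
  have htot := Finset.card_filter_add_card_filter_not
    (s := ((X.erase x).erase y).powersetCard r)
    (p := fun Y => e ∈ subtreeEdges G (insert x (insert y Y)))
  rw [hcompl, Finset.card_powersetCard, Finset.card_powersetCard,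
    card_erase_erase hx hy hne, card_erase_erase hxK hyK hne] at htot
  omega

lemma SDmap_eq_sum (G : SimpleGraph V) (w : Sym2 V → ℝ) (X : Finset V) (m : ℕ) (x y : V) :
    SDmap G w X m x y = ∑ e ∈ G.edgeFinset,
      (((((X.erase x).erase y).powersetCard (m-2)).filter
          (fun Y => e ∈ subtreeEdges G (insert x (insert y Y)))).card : ℝ) * w e := by
  unfold SDmap subtreeWeight
  calc ∑ Y ∈ ((X.erase x).erase y).powersetCard (m - 2),
        ∑ e ∈ subtreeEdges G (insert x (insert y Y)), w e
      = ∑ Y ∈ ((X.erase x).erase y).powersetCard (m - 2), ∑ e ∈ G.edgeFinset,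
          (if e ∈ subtreeEdges G (insert x (insert y Y)) then w e else 0) := by
        refine Finset.sum_congr rfl fun Y _ => ?_
        rw [Finset.sum_ite_mem, Finset.inter_eq_right.2]
        exact Finset.filter_subset _ _
    _ = ∑ e ∈ G.edgeFinset, ∑ Y ∈ ((X.erase x).erase y).powersetCard (m - 2),
          (if e ∈ subtreeEdges G (insert x (insert y Y)) then w e else 0) := Finset.sum_comm
    _ = _ := by
        refine Finset.sum_congr rfl fun e _ => ?_
        rw [Finset.sum_ite, Finset.sum_const, Finset.sum_const_zero, add_zero, nsmul_eq_mul]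

end Count

/-! ### Arithmetic identities for `C` -/

lemma C_natCast (p q : ℕ) : C (p : ℤ) (q : ℤ) = (p.choose q : ℤ) := by
  by_cases h : q ≤ p
  · rw [C, if_pos ⟨Int.natCast_nonneg q, by exact_mod_cast h⟩]
    simp
  · rw [C, if_neg (by push_neg; intro _; exact_mod_cast lt_of_not_ge h),
      Nat.choose_eq_zero_of_lt (lt_of_not_ge h)]
    simp

lemma C_of_neg {a b : ℤ} (hb : b < 0) : C a b = 0 := by
  rw [C, if_neg]; push_neg; intro h; omega

lemma Cid_C (n m K : ℕ) (hK : 2 ≤ K) (hKn : K ≤ n) (hm : 2 ≤ m) :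
    ((n-2).choose (m-2) : ℤ) - ((K-2).choose (m-2) : ℤ)
      = C ((n:ℤ)-2) ((m:ℤ)-2) - C ((K:ℤ)-2) ((m:ℤ)-2) := by
  have h1 : (n:ℤ) - 2 = ((n-2 : ℕ) : ℤ) := by omega
  have h2 : (m:ℤ) - 2 = ((m-2 : ℕ) : ℤ) := by omega
  have h3 : (K:ℤ) - 2 = ((K-2 : ℕ) : ℤ) := by omega
  rw [h1, h2, h3, C_natCast, C_natCast]

lemma Cid_B (n m : ℕ) (hn : 3 ≤ n) (hm : 2 ≤ m) (hmn : m + 1 ≤ n) :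
    ((n-2).choose (m-2) : ℤ) - ((n-3).choose (m-2) : ℤ) = C ((n:ℤ)-3) ((m:ℤ)-3) := by
  rcases Nat.lt_or_ge m 3 with hm3 | hm3
  · have hm2 : m = 2 := by omega
    subst hm2
    rw [C_of_neg (by norm_num)]
    norm_num
  · have h1 : (n:ℤ) - 3 = ((n-3 : ℕ) : ℤ) := by omega
    have h2 : (m:ℤ) - 3 = ((m-3 : ℕ) : ℤ) := by omega
    rw [h1, h2, C_natCast]
    have h3 : n - 2 = (n-3) + 1 := by omega
    have h4 : m - 2 = (m-3) + 1 := by omega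
    rw [h3, h4]
    push_cast [Nat.choose_succ_succ]
    ring

lemma Cid_A (n m : ℕ) (hn : 3 ≤ n) (hm : 2 ≤ m) (hmn : m + 1 ≤ n) :
    ((n-2).choose (m-2) : ℤ) + ((n-3).choose (m-2) : ℤ)
      = 2 * C ((n:ℤ)-3) ((m:ℤ)-2) + C ((n:ℤ)-3) ((m:ℤ)-3) := by
  have h1 : (n:ℤ) - 3 = ((n-3 : ℕ) : ℤ) := by omega
  have h2 : (m:ℤ) - 2 = ((m-2 : ℕ) : ℤ) := by omega
  rw [← Cid_B n m hn hm hmn, h1, h2, C_natCast]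
  ring

/-- Lemma 4 of Levy–Yoshida–Pachter, pendant edge equation: for a leaf
`i` with pendant edge `e_i` and leaves `a, b` whose paths from `i` meet exactly in `e_i`,
`S_D(i,a) + S_D(i,b) - S_D(a,b)
  = 2·C(n-3, m-2)·w(e_i) + C(n-3, m-3)·∑_j w(e_j) + C_i`. -/
theorem SD_pendant_edge_equation
    {V : Type*} [Fintype V] (G : SimpleGraph V) (X : Finset V)
    (hT : G.IsTree)
    (hleaf : ∀ v : V, G.degree v = 1 ↔ v ∈ X)
    (hint : ∀ v : V, v ∉ X → 3 ≤ G.degree v)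
    (w : Sym2 V → ℝ) (hw : ∀ e ∈ G.edgeSet, 0 < w e)
    (hn : 4 ≤ X.card)
    (m : ℕ) (hm : 2 ≤ m) (hmn : m + 1 ≤ X.card)
    -- `pend j` is the pendant edge `e_j` of the leaf `j`
    (pend : V → Sym2 V)
    (hpend : ∀ x ∈ X, pend x ∈ G.edgeSet ∧ x ∈ pend x)
    (i : V) (hi : i ∈ X)
    (a b : V) (ha : a ∈ X) (hb : b ∈ X) (hia : i ≠ a) (hib : i ≠ b) (hab : a ≠ b)
    -- the path from `i` to `a` and the path from `i` to `b` intersect exactly in `e_i`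
    (hmeet : ∀ e : Sym2 V, (OnPath G i a e ∧ OnPath G i b e) ↔ e = pend i) :
    SDmap G w X m i a + SDmap G w X m i b - SDmap G w X m a b =
      2 * (C ((X.card : ℤ) - 3) ((m : ℤ) - 2) : ℝ) * w (pend i)
      + (C ((X.card : ℤ) - 3) ((m : ℤ) - 3) : ℝ) * ∑ j ∈ X, w (pend j)
      + ∑ e ∈ G.edgeFinset.filter (fun e => ∀ x ∈ X, x ∉ e),
          ((C ((X.card : ℤ) - 2) ((m : ℤ) - 2) : ℝ) -
            (C (((leafSide G X i e).card : ℤ) - 2) ((m : ℤ) - 2) : ℝ)) * w e := by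
  
  classical
  have hdeg : ∀ x ∈ X, G.degree x = 1 := fun x hx => (hleaf x).2 hx
  obtain ⟨hei, hiei⟩ := hpend i hi
  have hBA : (X.card - 3).choose (m - 2) ≤ (X.card - 2).choose (m - 2) :=
    Nat.choose_le_choose _ (by omega)
  set F := fun (x y : V) (e : Sym2 V) =>
    ((((X.erase x).erase y).powersetCard (m-2)).filter
      (fun Y => e ∈ subtreeEdges G (insert x (insert y Y)))).card with hF
  have cop : ∀ {x y : V}, x ∈ X → y ∈ X → ∀ {e : Sym2 V}, e ∈ G.edgeSet →
      ¬ (G.deleteEdges {e}).Reachable x y → F x y e = (X.card - 2).choose (m - 2) := by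
    intro x y hx hy e he hr
    simp only [hF]
    exact count_opp hT he hx hy hr (m-2)
  have csame : ∀ {x y : V}, x ∈ X → y ∈ X → x ≠ y → ∀ {e : Sym2 V}, e ∈ G.edgeSet →
      (G.deleteEdges {e}).Reachable x y → F x y e =
        (X.card - 2).choose (m - 2) - ((leafSide G X x e).card - 2).choose (m - 2) := by
    intro x y hx hy hxy e he hr
    simp only [hF]
    exact count_same hT he hx hy hxy hr (m-2)
  -- the pendant edge of `i`
  have hOni : OnPath G i a (pend i) ∧ OnPath G i b (pend i) := (hmeet (pend i)).2 rfl
  have hria : ¬ (G.deleteEdges {pend i}).Reachable i a := (onPath_iff hT hei).1 hOni.1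
  have hrib : ¬ (G.deleteEdges {pend i}).Reachable i b := (onPath_iff hT hei).1 hOni.2
  have hPi : (F i a (pend i) : ℝ) + F i b (pend i) - F a b (pend i)
      = 2 * (C ((X.card : ℤ) - 3) ((m : ℤ) - 2) : ℝ)
        + (C ((X.card : ℤ) - 3) ((m : ℤ) - 3) : ℝ) := by
    have h1 : F i a (pend i) = (X.card - 2).choose (m - 2) := cop hi ha hei hria
    have h2 : F i b (pend i) = (X.card - 2).choose (m - 2) := cop hi hb hei hrib
    have h3 : F a b (pend i)
        = (X.card - 2).choose (m - 2) - (X.card - 3).choose (m - 2) := by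
      rw [csame ha hb hab hei (two_class hT hei hria hrib),
        leafSide_pendant hT (hdeg i hi) hei hiei (Ne.symm hia),
        Finset.card_erase_of_mem hi]
      have hc : X.card - 1 - 2 = X.card - 3 := by omega
      rw [hc]
    have h4 : (((X.card - 2).choose (m - 2) : ℝ) + ((X.card - 3).choose (m - 2) : ℝ))
        = 2 * (C ((X.card : ℤ) - 3) ((m : ℤ) - 2) : ℝ)
          + (C ((X.card : ℤ) - 3) ((m : ℤ) - 3) : ℝ) := by
      exact_mod_cast congrArg (Int.cast : ℤ → ℝ) (Cid_A X.card m (by omega) hm hmn)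
    rw [h1, h2, h3, Nat.cast_sub hBA]
    linarith [h4]
  -- pendant edges of other leaves
  have hPend : ∀ j ∈ X, j ≠ i → (F i a (pend j) : ℝ) + F i b (pend j) - F a b (pend j)
      = (C ((X.card : ℤ) - 3) ((m : ℤ) - 3) : ℝ) := by
    intro j hj hji
    obtain ⟨hej, hjej⟩ := hpend j hj
    have hcastB : (((X.card - 2).choose (m - 2) : ℝ) - ((X.card - 3).choose (m - 2) : ℝ))
        = (C ((X.card : ℤ) - 3) ((m : ℤ) - 3) : ℝ) := by
      exact_mod_cast congrArg (Int.cast : ℤ → ℝ) (Cid_B X.card m (by omega) hm hmn)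
    have hside : ∀ {x : V}, x ∈ X → x ≠ j → (G.deleteEdges {pend j}).Reachable x j → False :=
      fun hx hxj hr => not_reach_pendant (hdeg j hj) hej hjej hxj hr
    have hsame : ∀ {x y : V}, x ∈ X → y ∈ X → x ≠ y → x ≠ j → y ≠ j →
        F x y (pend j) = (X.card - 2).choose (m - 2) - (X.card - 3).choose (m - 2) := by
      intro x y hx hy hxy hxj hyj
      rw [csame hx hy hxy hej (reach_of_ne_pendant hT (hdeg j hj) hej hjej hxj hyj),
        leafSide_pendant hT (hdeg j hj) hej hjej hxj, Finset.card_erase_of_mem hj]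
      have hc : X.card - 1 - 2 = X.card - 3 := by omega
      rw [hc]
    rcases eq_or_ne j a with rfl | hja
    · -- j = a
      have h1 : F i j (pend j) = (X.card - 2).choose (m - 2) :=
        cop hi hj hej (not_reach_pendant (hdeg j hj) hej hjej hia)
      have h2 : F i b (pend j)
          = (X.card - 2).choose (m - 2) - (X.card - 3).choose (m - 2) :=
        hsame hi hb hib (Ne.symm hji) (Ne.symm hab)
      have h3 : F j b (pend j) = (X.card - 2).choose (m - 2) := by
        refine cop hj hb hej ?_
        intro hr
        exact hab (reach_pendant (hdeg j hj) hej hjej hr).symm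
      rw [h1, h2, h3, Nat.cast_sub hBA]
      linarith [hcastB]
    rcases eq_or_ne j b with rfl | hjb
    · -- j = b
      have h1 : F i a (pend j)
          = (X.card - 2).choose (m - 2) - (X.card - 3).choose (m - 2) :=
        hsame hi ha hia (Ne.symm hji) (Ne.symm hja)
      have h2 : F i j (pend j) = (X.card - 2).choose (m - 2) :=
        cop hi hj hej (not_reach_pendant (hdeg j hj) hej hjej hib)
      have h3 : F a j (pend j) = (X.card - 2).choose (m - 2) :=
        cop ha hj hej (not_reach_pendant (hdeg j hj) hej hjej hab)
      rw [h1, h2, h3, Nat.cast_sub hBA]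
      linarith [hcastB]
    · -- j ∉ {i, a, b}
      have h1 := hsame hi ha hia (Ne.symm hji) (Ne.symm hja)
      have h2 := hsame hi hb hib (Ne.symm hji) (Ne.symm hjb)
      have h3 := hsame ha hb hab (Ne.symm hja) (Ne.symm hjb)
      rw [h1, h2, h3, Nat.cast_sub hBA]
      linarith [hcastB]
  -- internal edges
  have hI : ∀ e ∈ G.edgeFinset.filter (fun e => ∀ x ∈ X, x ∉ e),
      (F i a e : ℝ) + F i b e - F a b e
        = (C ((X.card : ℤ) - 2) ((m : ℤ) - 2) : ℝ)
          - (C (((leafSide G X i e).card : ℤ) - 2) ((m : ℤ) - 2) : ℝ) := by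
    intro e heI
    rw [Finset.mem_filter, mem_edgeFinset] at heI
    obtain ⟨he, hno⟩ := heI
    have hne_pi : e ≠ pend i := fun h => (hno i hi) (h ▸ hiei)
    have hKn : (leafSide G X i e).card ≤ X.card :=
      Finset.card_le_card (Finset.filter_subset _ _)
    have hiK : i ∈ leafSide G X i e := Finset.mem_filter.2 ⟨hi, Reachable.refl _⟩
    have hor : (G.deleteEdges {e}).Reachable i a ∨ (G.deleteEdges {e}).Reachable i b := by
      by_contra hc
      push_neg at hc
      exact hne_pi ((hmeet e).1 ⟨(onPath_iff hT he).2 hc.1, (onPath_iff hT he).2 hc.2⟩)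
    have finish : ∀ hK2 : 2 ≤ (leafSide G X i e).card,
        ∀ hcK : ((leafSide G X i e).card - 2).choose (m - 2) ≤ (X.card - 2).choose (m - 2),
        (((X.card - 2).choose (m - 2) : ℝ)
            - (((leafSide G X i e).card - 2).choose (m - 2) : ℝ))
          = (C ((X.card : ℤ) - 2) ((m : ℤ) - 2) : ℝ)
            - (C (((leafSide G X i e).card : ℤ) - 2) ((m : ℤ) - 2) : ℝ) := by
      intro hK2 _
      exact_mod_cast congrArg (Int.cast : ℤ → ℝ)
        (Cid_C X.card m (leafSide G X i e).card hK2 hKn hm)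
    by_cases hria' : (G.deleteEdges {e}).Reachable i a
    · have haK : a ∈ leafSide G X i e := Finset.mem_filter.2 ⟨ha, hria'⟩
      have hK2 : 2 ≤ (leafSide G X i e).card :=
        Finset.one_lt_card.2 ⟨i, hiK, a, haK, hia⟩
      have hcK : ((leafSide G X i e).card - 2).choose (m - 2)
          ≤ (X.card - 2).choose (m - 2) := Nat.choose_le_choose _ (by omega)
      by_cases hrib' : (G.deleteEdges {e}).Reachable i b
      · have h1 := csame hi ha hia he hria'
        have h2 := csame hi hb hib he hrib'
        have h3 : F a b e = (X.card - 2).choose (m - 2)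
            - ((leafSide G X i e).card - 2).choose (m - 2) := by
          rw [csame ha hb hab he (hria'.symm.trans hrib'), leafSide_congr hria']
        rw [h1, h2, h3, Nat.cast_sub hcK]
        linarith [finish hK2 hcK]
      · have h1 := csame hi ha hia he hria'
        have h2 : F i b e = (X.card - 2).choose (m - 2) := cop hi hb he hrib'
        have h3 : F a b e = (X.card - 2).choose (m - 2) := by
          refine cop ha hb he ?_
          intro hr
          exact hrib' (hria'.trans hr)
        rw [h1, h2, h3, Nat.cast_sub hcK]
        linarith [finish hK2 hcK]
    · have hrib' : (G.deleteEdges {e}).Reachable i b := hor.resolve_left hria'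
      have hbK : b ∈ leafSide G X i e := Finset.mem_filter.2 ⟨hb, hrib'⟩
      have hK2 : 2 ≤ (leafSide G X i e).card :=
        Finset.one_lt_card.2 ⟨i, hiK, b, hbK, hib⟩
      have hcK : ((leafSide G X i e).card - 2).choose (m - 2)
          ≤ (X.card - 2).choose (m - 2) := Nat.choose_le_choose _ (by omega)
      have h1 : F i a e = (X.card - 2).choose (m - 2) := cop hi ha he hria'
      have h2 := csame hi hb hib he hrib'
      have h3 : F a b e = (X.card - 2).choose (m - 2) := by
        refine cop ha hb he ?_
        intro hr
        exact hria' (hrib'.trans hr.symm)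
      rw [h1, h2, h3, Nat.cast_sub hcK]
      linarith [finish hK2 hcK]
  -- pendant edges are exactly the image of `pend`
  have hinj : ∀ x ∈ X, ∀ y ∈ X, pend x = pend y → x = y := by
    intro j hj k hk hjk
    by_contra hne
    have hkpj : k ∈ pend j := hjk ▸ (hpend k hk).2
    have hcard : 0 < ((X.erase j).erase k).card := by
      rw [card_erase_erase hj hk hne]; omega
    obtain ⟨z, hz⟩ := Finset.card_pos.1 hcard
    rw [Finset.mem_erase] at hz
    obtain ⟨hzk, hz2⟩ := hz
    rw [Finset.mem_erase] at hz2
    obtain ⟨hzj, hzX⟩ := hz2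
    obtain ⟨v, hv⟩ := Sym2.mem_iff_exists.1 (hpend j hj).2
    have hvk : v = k := by
      rcases Sym2.mem_iff.1 (hv ▸ hkpj) with h | h
      · exact absurd h.symm hne
      · exact h.symm
    rw [hvk] at hv
    rcases reach_or hT.isConnected.preconnected (u := j) (v := k) z with hzr | hzr
    · exact hzj (reach_pendant (hdeg j hj) (hv ▸ (hpend j hj).1) (hv ▸ (hpend j hj).2) hzr.symm)
    · exact hzk (reach_pendant (hdeg k hk) (hv ▸ (hpend j hj).1)
        (hv ▸ hkpj) hzr.symm)
  have hP : G.edgeFinset.filter (fun e => ¬ ∀ x ∈ X, x ∉ e) = X.image pend := by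
    ext e
    simp only [Finset.mem_filter, mem_edgeFinset, Finset.mem_image]
    constructor
    · rintro ⟨he, hx⟩
      push_neg at hx
      obtain ⟨x, hxX, hxe⟩ := hx
      exact ⟨x, hxX, leaf_edge_unique (hdeg x hxX) (hpend x hxX).1 (hpend x hxX).2 he hxe⟩
    · rintro ⟨x, hxX, rfl⟩
      refine ⟨(hpend x hxX).1, ?_⟩
      push_neg
      exact ⟨x, hxX, (hpend x hxX).2⟩
  -- assemble
  have hLHS : SDmap G w X m i a + SDmap G w X m i b - SDmap G w X m a b
      = ∑ e ∈ G.edgeFinset, ((F i a e : ℝ) + F i b e - F a b e) * w e := by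
    rw [SDmap_eq_sum, SDmap_eq_sum, SDmap_eq_sum, ← Finset.sum_add_distrib,
      ← Finset.sum_sub_distrib]
    refine Finset.sum_congr rfl fun e _ => ?_
    simp only [hF]
    ring
  rw [hLHS,
    ← Finset.sum_filter_add_sum_filter_not G.edgeFinset (fun e => ∀ x ∈ X, x ∉ e)
      (fun e => ((F i a e : ℝ) + F i b e - F a b e) * w e)]
  have hIsum : ∑ e ∈ G.edgeFinset.filter (fun e => ∀ x ∈ X, x ∉ e),
        ((F i a e : ℝ) + F i b e - F a b e) * w e
      = ∑ e ∈ G.edgeFinset.filter (fun e => ∀ x ∈ X, x ∉ e),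
        ((C ((X.card : ℤ) - 2) ((m : ℤ) - 2) : ℝ)
          - (C (((leafSide G X i e).card : ℤ) - 2) ((m : ℤ) - 2) : ℝ)) * w e :=
    Finset.sum_congr rfl fun e he => by rw [hI e he]
  rw [hIsum]
  rw [hP, Finset.sum_image hinj]
  rw [← Finset.add_sum_erase X _ hi]
  rw [hPi]
  have hPsum : ∑ j ∈ X.erase i,
        ((F i a (pend j) : ℝ) + F i b (pend j) - F a b (pend j)) * w (pend j)
      = ∑ j ∈ X.erase i, (C ((X.card : ℤ) - 3) ((m : ℤ) - 3) : ℝ) * w (pend j) :=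
    Finset.sum_congr rfl fun j hj => by
      rw [hPend j (Finset.mem_of_mem_erase hj) (Finset.ne_of_mem_erase hj)]
  rw [hPsum]
  rw [← Finset.mul_sum, ← Finset.add_sum_erase X (fun j => w (pend j)) hi]
  ring
end
end

section
/- Let X be a finite set with |X| = n, let 2 ≤ m ≤ n, and let D be any real-valued function on the m-element subsets of X. Define S_D(i,j) = Σ D({i,j} ∪ Y), the sum over all (m−2)-element subsets Y of X \ {i,j}, for distinct i, j ∈ X. Define Q_D(i,j) = ((n−2)/(m−1))·S_D(i,j) − Σ_{Y∈C(X\{i}, m−1)} D({i}∪Y) − Σ_{Y∈C(X\{j}, m−1)} D({j}∪Y), where C(A, r) denotes the r-element subsets of A, and define Q_{S_D}(i,j) = (n−2)·S_D(i,j) − Σ_{k∈X, k≠i} S_D(i,k) − Σ_{k∈X, k≠j} S_D(j,k). Then Q_D(i,j) = (1/(m−1))·Q_{S_D}(i,j) for all distinct i, j ∈ X. -/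
open Finset

noncomputable section

lemma sum_S_eq {X : Type*} [Fintype X] [DecidableEq X]
    (m : ℕ) (hm : 2 ≤ m) (D : Finset X → ℝ) (i : X) :
    ∑ k ∈ univ.erase i,
        ∑ Y ∈ ((univ.erase i).erase k).powersetCard (m - 2), D (insert i (insert k Y)) =
      ((m : ℝ) - 1) * ∑ Y ∈ (univ.erase i).powersetCard (m - 1), D (insert i Y) := by
  have hR : ((m : ℝ) - 1) * ∑ Y ∈ (univ.erase i).powersetCard (m - 1), D (insert i Y)
      = ∑ Z ∈ (univ.erase i).powersetCard (m - 1), ∑ k ∈ Z, D (insert i Z) := by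
    rw [mul_sum]
    refine sum_congr rfl fun Z hZ => ?_
    rw [sum_const, nsmul_eq_mul, (mem_powersetCard.1 hZ).2]
    have : ((m - 1 : ℕ) : ℝ) = (m : ℝ) - 1 := by
      have : (1 : ℕ) ≤ m := le_trans (by norm_num) hm
      push_cast [Nat.cast_sub this]; ring
    rw [this]
  rw [hR, Finset.sum_sigma', Finset.sum_sigma']
  refine Finset.sum_nbij' (fun p => ⟨insert p.1 p.2, p.1⟩) (fun q => ⟨q.2, q.1.erase q.2⟩)
    ?_ ?_ ?_ ?_ ?_
  · rintro ⟨k, Y⟩ hp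
    simp only [mem_sigma, mem_erase, mem_powersetCard] at hp ⊢
    obtain ⟨⟨hki, -⟩, hYsub, hYcard⟩ := hp
    have hkY : k ∉ Y := fun h => (mem_erase.1 (hYsub h)).1 rfl
    refine ⟨⟨?_, ?_⟩, mem_insert_self _ _⟩
    · intro x hx
      rcases mem_insert.1 hx with rfl | hx
      · exact mem_erase.2 ⟨hki, mem_univ _⟩
      · exact mem_of_mem_erase (hYsub hx)
    · rw [card_insert_of_notMem hkY, hYcard]; omega
  · rintro ⟨Z, k⟩ hq
    simp only [mem_sigma, mem_powersetCard, mem_erase] at hq ⊢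
    obtain ⟨⟨hZsub, hZcard⟩, hkZ⟩ := hq
    have hki : k ≠ i := (mem_erase.1 (hZsub hkZ)).1
    refine ⟨⟨hki, mem_univ _⟩, ?_, ?_⟩
    · intro x hx
      have hx' := mem_erase.1 hx
      exact mem_erase.2 ⟨hx'.1, hZsub hx'.2⟩
    · rw [card_erase_of_mem hkZ, hZcard]; omega
  · rintro ⟨k, Y⟩ hp
    simp only [mem_sigma, mem_erase, mem_powersetCard] at hp
    obtain ⟨⟨hki, -⟩, hYsub, hYcard⟩ := hp
    have hkY : k ∉ Y := fun h => (mem_erase.1 (hYsub h)).1 rfl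
    simp [erase_insert hkY]
  · rintro ⟨Z, k⟩ hq
    simp only [mem_sigma, mem_powersetCard] at hq
    simp [insert_erase hq.2]
  · rintro ⟨k, Y⟩ hp
    rfl

/-- with `S_D(i,j) = ∑_{Y ∈ C(X\{i,j}, m-2)} D({i,j} ∪ Y)`,
the generalized neighbor-joining criterion
`Q_D(i,j) = ((n-2)/(m-1))·S_D(i,j) - ∑_{Y ∈ C(X\{i}, m-1)} D({i}∪Y)
          - ∑_{Y ∈ C(X\{j}, m-1)} D({j}∪Y)`
equals `(1/(m-1))` times the classical criterion applied to `S_D`: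
`Q_{S_D}(i,j) = (n-2)·S_D(i,j) - ∑_{k ≠ i} S_D(i,k) - ∑_{k ≠ j} S_D(j,k)`. -/
theorem QD_eq_QSD
    {X : Type*} [Fintype X] [DecidableEq X]
    (m : ℕ) (hm : 2 ≤ m) (hmn : m ≤ Fintype.card X)
    (D : Finset X → ℝ)
    -- `S` is `S_D`
    (S : X → X → ℝ)
    (hS : ∀ i j : X, S i j =
      ∑ Y ∈ ((univ.erase i).erase j).powersetCard (m - 2), D (insert i (insert j Y)))
    (i j : X) (hij : i ≠ j) :
    ((Fintype.card X - 2 : ℝ) / (m - 1 : ℝ)) * S i j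
        - (∑ Y ∈ (univ.erase i).powersetCard (m - 1), D (insert i Y))
        - (∑ Y ∈ (univ.erase j).powersetCard (m - 1), D (insert j Y)) =
      (1 / (m - 1 : ℝ)) *
        ((Fintype.card X - 2 : ℝ) * S i j
          - (∑ k ∈ univ.erase i, S i k) - (∑ k ∈ univ.erase j, S j k)) := by
  have hi : ∑ k ∈ univ.erase i, S i k
      = ((m : ℝ) - 1) * ∑ Y ∈ (univ.erase i).powersetCard (m - 1), D (insert i Y) := by
    rw [← sum_S_eq m hm D i]
    exact sum_congr rfl fun k _ => hS i k
  have hj : ∑ k ∈ univ.erase j, S j k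
      = ((m : ℝ) - 1) * ∑ Y ∈ (univ.erase j).powersetCard (m - 1), D (insert j Y) := by
    rw [← sum_S_eq m hm D j]
    exact sum_congr rfl fun k _ => hS j k
  have hm1 : (m : ℝ) - 1 ≠ 0 := by
    have : (2 : ℝ) ≤ (m : ℝ) := by exact_mod_cast hm
    linarith
  rw [hi, hj]
  field_simp
end
end
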